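/- arXiv:2302.14753 — 5 statements merged into one kernel-verified Lean document; each statement's English description precedes it below -/
import Mathlib

section
/- Consider the coupled recursions f(0)=g(0)=0, f(t)=dε+(1+dε)f(t−1)+dε·g(t−1), g(t)=dε+dε·f(t−1)+dε·g(t−1), with d,T positive and ε ≤ 1/(12dT). Then for all t ≤ T, f(t) ≤ 3dTε (and g(t) ≤ 6dε). -/
/-! With `a = dε`, the bounds `f t ≤ 3at` and `g t ≤ 6a` propagate by induction as long as
`at ≤ 1/12`: the step only needs `3at + 6a ≤ 2` for `f` and `1 + 3at + 6a ≤ 6` for `g`. -/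

namespace CoupledRecursion

variable {a : ℝ} {f g : ℕ → ℝ}

theorem step_le {x y s : ℝ} (ha : 0 ≤ a) (hs : 0 ≤ s) (has : a * (s + 1) ≤ 1 / 12)
    (hx : x ≤ 3 * a * s) (hy : y ≤ 6 * a) :
    a + (1 + a) * x + a * y ≤ 3 * a * (s + 1) ∧ a + a * x + a * y ≤ 6 * a := by
  have hxa : a * x ≤ a * (3 * a * s) := mul_le_mul_of_nonneg_left hx ha
  have hya : a * y ≤ a * (6 * a) := mul_le_mul_of_nonneg_left hy ha
  have hslack : 3 * a * s + 6 * a ≤ 2 := by nlinarith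
  constructor <;> nlinarith

theorem bounds_of_mul_le (ha : 0 ≤ a) (hf0 : f 0 = 0) (hg0 : g 0 = 0)
    (hf : ∀ t, f (t + 1) = a + (1 + a) * f t + a * g t)
    (hg : ∀ t, g (t + 1) = a + a * f t + a * g t) :
    ∀ t : ℕ, a * t ≤ 1 / 12 → f t ≤ 3 * a * t ∧ g t ≤ 6 * a := by
  intro t
  induction t with
  | zero => intro _; simp [hf0, hg0, ha]
  | succ t ih =>
    intro hat
    push_cast at hat ⊢
    have hat' : a * t ≤ 1 / 12 := le_trans (by nlinarith) hat
    obtain ⟨hft, hgt⟩ := ih hat'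
    rw [hf, hg]
    exact step_le ha t.cast_nonneg hat hft hgt

end CoupledRecursion

theorem coupled_recursion_bound_general (d ε : ℝ) (T : ℕ)
    (hd : 0 < d) (hε : 0 < ε) (hεT : ε ≤ 1 / (12 * d * T))
    (f g : ℕ → ℝ) (hf0 : f 0 = 0) (hg0 : g 0 = 0)
    (hf : ∀ t, f (t + 1) = d * ε + (1 + d * ε) * f t + d * ε * g t)
    (hg : ∀ t, g (t + 1) = d * ε + d * ε * f t + d * ε * g t) :
    ∀ t ≤ T, f t ≤ 3 * d * T * ε ∧ g t ≤ 6 * d * ε := by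
  intro t ht
  have hdε : 0 ≤ d * ε := by positivity
  have htT : (t : ℝ) ≤ T := by exact_mod_cast ht
  have hdεT : d * ε * T ≤ 1 / 12 := by
    rcases (Nat.cast_nonneg T : (0 : ℝ) ≤ T).eq_or_lt with hT | hT
    · simp [← hT]
    · rw [le_div_iff₀ (by positivity)] at hεT
      linarith
  have hdεt : d * ε * t ≤ d * ε * T := mul_le_mul_of_nonneg_left htT hdε
  obtain ⟨hft, hgt⟩ :=
    CoupledRecursion.bounds_of_mul_le hdε hf0 hg0 hf hg t (hdεt.trans hdεT)
  exact ⟨by linarith, by linarith⟩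

/-- the coupled error recursions satisfy `f t ≤ 3dTε` and
`g t ≤ 6dε` for all `t ≤ T`, provided `ε ≤ 1/(12dT)`. -/
theorem coupled_recursion_bound (d ε : ℝ) (T : ℕ)
    (hd : 0 < d) (hT : 0 < T) (hε : 0 < ε) (hεT : ε ≤ 1 / (12 * d * T))
    (f g : ℕ → ℝ) (hf0 : f 0 = 0) (hg0 : g 0 = 0)
    (hf : ∀ t, f (t + 1) = d * ε + (1 + d * ε) * f t + d * ε * g t)
    (hg : ∀ t, g (t + 1) = d * ε + d * ε * f t + d * ε * g t) :
    ∀ t ≤ T, f t ≤ 3 * d * T * ε ∧ g t ≤ 6 * d * ε :=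
  coupled_recursion_bound_general d ε T hd hε hεT f g hf0 hg0 hf hg
end

section
/- Coefficient evolution: with A_{o,t} as in the circulant identity and coefficients chosen in the row space (span of the non-kernel eigenvectors) of Pr[F_{t+1}|B_{t+1}]ᵀ D_{t+1}^{-1} Pr[F_{t+1}|B_{t+1}], for any history x of length t with Pr[o|x] > 0, one has A_{o,t} β(x) = Pr[o|x] · β(xo). -/
/-!
The defect `A_{o,t} β(x) - Pr[o|x] β(xo)` is mapped to zero by `Pr[F_{t+1}|B_{t+1}]`: the circulant
identity and Bayes' rule give the same image for both terms. It is also orthogonal to that kernel,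
since both terms are, so it is orthogonal to itself and vanishes.
-/

open Matrix

theorem Matrix.eq_of_mulVec_eq_of_forall_mulVec_eq_zero_dotProduct
    {m n R : Type*} [Fintype n] [CommRing R] [LinearOrder R] [IsStrictOrderedRing R]
    (M : Matrix m n R) {u v : n → R}
    (hu : ∀ w, M *ᵥ w = 0 → u ⬝ᵥ w = 0) (hv : ∀ w, M *ᵥ w = 0 → v ⬝ᵥ w = 0)
    (h : M *ᵥ u = M *ᵥ v) : u = v := by
  have hker : M *ᵥ (u - v) = 0 := by rw [mulVec_sub, h, sub_self]
  have hself : (u - v) ⬝ᵥ (u - v) = 0 := by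
    rw [sub_dotProduct, hu _ hker, hv _ hker, sub_zero]
  exact sub_eq_zero.mp (dotProduct_self_eq_zero.mp hself)

theorem coefficient_evolution_general
    {F' ι ι' O : Type*} [Fintype ι] [Fintype ι']
    (Pt : Matrix (O × F') ι ℝ)       -- Pr[F_t | B_t]
    (Pnext : Matrix F' ι' ℝ)         -- Pr[F_{t+1} | B_{t+1}]
    (o : O) (Aop : Matrix ι' ι ℝ)
    (hAop : ∀ (f : F') (j : ι), (Pnext * Aop) f j = Pt (o, f) j)
    (βx : ι → ℝ) (βxo : ι' → ℝ)
    (px : O × F' → ℝ)                -- Pr[F_t | x]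
    (pxo : F' → ℝ)                   -- Pr[F_{t+1} | xo]
    (pObs : ℝ)                       -- Pr[o | x]
    (hβx : Pt.mulVec βx = px)
    (hβxo : Pnext.mulVec βxo = pxo)
    (hbayes : ∀ f : F', px (o, f) = pObs * pxo f)
    -- β(xo) lies in (ker Pr[F_{t+1}|B_{t+1}])ᗮ :
    (hβxo_perp : ∀ w : ι' → ℝ, Pnext.mulVec w = 0 → ∑ j, βxo j * w j = 0)
    -- range of A_{o,t} is contained in (ker Pr[F_{t+1}|B_{t+1}])ᗮ :
    (hrange : ∀ (z : ι → ℝ) (w : ι' → ℝ),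
      Pnext.mulVec w = 0 → ∑ j, Aop.mulVec z j * w j = 0) :
    Aop.mulVec βx = pObs • βxo := by
  have himage : Pnext *ᵥ (Aop *ᵥ βx) = Pnext *ᵥ (pObs • βxo) := by
    funext f
    rw [mulVec_mulVec, mulVec_smul, hβxo, Pi.smul_apply, smul_eq_mul, ← hbayes, ← hβx]
    exact congrArg (· ⬝ᵥ βx) (funext (hAop f))
  refine Pnext.eq_of_mulVec_eq_of_forall_mulVec_eq_zero_dotProduct (hrange βx) (fun w hw => ?_)
    himage
  rw [smul_dotProduct, show βxo ⬝ᵥ w = 0 from hβxo_perp w hw, smul_zero]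

/-- coefficient evolution: with `A_{o,t}` satisfying the
circulant identity `Pr[F_{t+1}|B_{t+1}] A_{o,t} = Pr[oF_{t+1}|B_t]`
(here `F_t = O × F_{t+1}`), with `β(x)` a coefficient vector for
`Pr[F_t|x]` in the basis `B_t`, with `β(xo)` the coefficient vector
for `Pr[F_{t+1}|xo]` lying in the orthogonal complement of the kernel of
`Pr[F_{t+1}|B_{t+1}]` (the row space of the preconditioned Gram matrix),
with the range of `A_{o,t}` contained in that same complement, and with
`Pr[o|x] > 0`, one has `A_{o,t} β(x) = Pr[o|x] • β(xo)`. -/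
theorem coefficient_evolution
    {F' ι ι' O : Type*} [Fintype F'] [Fintype ι] [Fintype ι'] [Fintype O]
    (Pt : Matrix (O × F') ι ℝ)       -- Pr[F_t | B_t]
    (Pnext : Matrix F' ι' ℝ)         -- Pr[F_{t+1} | B_{t+1}]
    (o : O) (Aop : Matrix ι' ι ℝ)
    (hAop : ∀ (f : F') (j : ι), (Pnext * Aop) f j = Pt (o, f) j)
    (βx : ι → ℝ) (βxo : ι' → ℝ)
    (px : O × F' → ℝ)                -- Pr[F_t | x]
    (pxo : F' → ℝ)                   -- Pr[F_{t+1} | xo]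
    (pObs : ℝ) (hpObs : 0 < pObs)    -- Pr[o | x]
    (hβx : Pt.mulVec βx = px)
    (hβxo : Pnext.mulVec βxo = pxo)
    (hbayes : ∀ f : F', px (o, f) = pObs * pxo f)
    -- β(xo) lies in (ker Pr[F_{t+1}|B_{t+1}])ᗮ :
    (hβxo_perp : ∀ w : ι' → ℝ, Pnext.mulVec w = 0 → ∑ j, βxo j * w j = 0)
    -- range of A_{o,t} is contained in (ker Pr[F_{t+1}|B_{t+1}])ᗮ :
    (hrange : ∀ (z : ι → ℝ) (w : ι' → ℝ),
      Pnext.mulVec w = 0 → ∑ j, Aop.mulVec z j * w j = 0) :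
    Aop.mulVec βx = pObs • βxo :=
  coefficient_evolution_general Pt Pnext o Aop hAop βx βxo px pxo pObs hβx hβxo hbayes hβxo_perp
    hrange
end

section
/- Projection perturbation (Davis–Kahan corollary): Let Σ, Σ̂ be real symmetric n×n matrices with V, V̂ ∈ ℝ^{n×r} orthonormal bases of invariant subspaces such that the eigenvalues of Σ on span(V) all lie in [a,b] and the eigenvalues of Σ̂ on the orthogonal complement of span(V̂) avoid [a−γ, b+γ] for some γ > 0. Then ‖VVᵀ − V̂V̂ᵀ‖_F ≤ √(2r)·‖Σ − Σ̂‖₂ / γ. -/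
/-!
Put `M = V̂⊥ᵀ V`. Because `Σ V = V D₀` and `Σ̂ V̂⊥ = V̂⊥ D₁` with `Σ̂` symmetric, `M` solves the
Sylvester equation `M D₀ - D₁ M = V̂⊥ᵀ (Σ - Σ̂) V`. The diagonals of `D₀` and `D₁` are
`γ`-separated, so entrywise `γ ‖M‖_F ≤ ‖V̂⊥ᵀ (Σ - Σ̂) V‖_F`, and the right side is at most
`√r ‖Σ - Σ̂‖₂`, column by column, since `V` has unit columns and `V̂⊥ᵀ` is a contraction.
Finally, expanding both sides as traces gives `‖VVᵀ - V̂V̂ᵀ‖_F² = 2 ‖M‖_F²`.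
-/

open Matrix

variable {m k l o : Type*} [Fintype m] [Fintype k] [Fintype l] [Fintype o]

def frobeniusSq (A : Matrix m k ℝ) : ℝ := ∑ i, ∑ j, A i j ^ 2

lemma frobeniusSq_eq_trace_mul_transpose (A : Matrix m k ℝ) : frobeniusSq A = (A * Aᵀ).trace := by
  simp [frobeniusSq, trace, mul_apply, sq]

lemma frobeniusSq_eq_sum_dotProduct_col (A : Matrix m k ℝ) :
    frobeniusSq A = ∑ j, Aᵀ j ⬝ᵥ Aᵀ j := by
  rw [frobeniusSq, Finset.sum_comm]
  simp [dotProduct, sq]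

section Projections

variable [DecidableEq k] {V W : Matrix m k ℝ}

lemma isIdempotentElem_mul_transpose (hV : Vᵀ * V = 1) : IsIdempotentElem (V * Vᵀ) := by
  rw [IsIdempotentElem, Matrix.mul_assoc, ← Matrix.mul_assoc Vᵀ, hV, Matrix.one_mul]

lemma trace_mul_transpose_eq_card (hV : Vᵀ * V = 1) :
    (V * Vᵀ).trace = Fintype.card k := by
  rw [trace_mul_comm, hV, trace_one]

theorem frobeniusSq_sub_projections [DecidableEq m] {U : Matrix m l ℝ} (hV : Vᵀ * V = 1)
    (hW : Wᵀ * W = 1) (hdecomp : W * Wᵀ + U * Uᵀ = 1) :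
    frobeniusSq (V * Vᵀ - W * Wᵀ) = 2 * frobeniusSq (Uᵀ * V) := by
  set P := V * Vᵀ
  set Q := W * Wᵀ
  have hUU : U * Uᵀ = 1 - Q := eq_sub_of_add_eq' hdecomp
  have hsymm : (P - Q)ᵀ = P - Q := by simp [P, Q, transpose_sub, transpose_mul]
  have hleft : ((P - Q) * (P - Q)).trace = P.trace + Q.trace - 2 * (P * Q).trace := by
    rw [Matrix.sub_mul, Matrix.mul_sub, Matrix.mul_sub, (isIdempotentElem_mul_transpose hV).eq,
      (isIdempotentElem_mul_transpose hW).eq, trace_sub, trace_sub, trace_sub,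
      trace_mul_comm Q P]
    ring
  have hright : ((Uᵀ * V) * (Uᵀ * V)ᵀ).trace = P.trace - (P * Q).trace :=
    calc ((Uᵀ * V) * (Uᵀ * V)ᵀ).trace = (Vᵀ * (U * Uᵀ) * V).trace := by
          rw [trace_mul_comm, transpose_mul, transpose_transpose, Matrix.mul_assoc,
            Matrix.mul_assoc, Matrix.mul_assoc]
      _ = (P * (1 - Q)).trace := by rw [trace_mul_cycle, hUU, trace_mul_comm]
      _ = P.trace - (P * Q).trace := by rw [Matrix.mul_sub, Matrix.mul_one, trace_sub]
  rw [frobeniusSq_eq_trace_mul_transpose, frobeniusSq_eq_trace_mul_transpose, hsymm, hleft, hright,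
    trace_mul_transpose_eq_card hV, trace_mul_transpose_eq_card hW]
  ring

end Projections

lemma le_abs_sub_of_mem_Icc_of_gap {a b γ x y : ℝ} (hx : a ≤ x ∧ x ≤ b)
    (hy : y < a - γ ∨ b + γ < y) : γ ≤ |y - x| := by
  rw [le_abs]
  rcases hy with hy | hy
  · right; linarith [hx.1]
  · left; linarith [hx.2]

theorem sq_mul_frobeniusSq_le_of_sylvester [DecidableEq k] [DecidableEq l] {M N : Matrix l k ℝ}
    {d₀ : k → ℝ} {d₁ : l → ℝ} {γ : ℝ} (hγ : 0 ≤ γ) (hgap : ∀ i j, γ ≤ |d₁ i - d₀ j|)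
    (hsylv : M * diagonal d₀ - diagonal d₁ * M = N) :
    γ ^ 2 * frobeniusSq M ≤ frobeniusSq N := by
  have hentry : ∀ i j, N i j = -((d₁ i - d₀ j) * M i j) := fun i j => by
    rw [← hsylv, Matrix.sub_apply, mul_diagonal, diagonal_mul]
    ring
  simp only [frobeniusSq, Finset.mul_sum, hentry, neg_sq, mul_pow]
  refine Finset.sum_le_sum fun i _ => Finset.sum_le_sum fun j _ => ?_
  gcongr ?_ * _
  exact sq_le_sq.2 (by rw [abs_of_nonneg hγ]; exact hgap i j)

lemma sylvester_eq_of_invariant {S S' : Matrix m m ℝ} {V : Matrix m k ℝ} {U : Matrix m l ℝ}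
    {D : Matrix k k ℝ} {D' : Matrix l l ℝ} (hS' : S'.IsSymm) (hV : S * V = V * D)
    (hU : S' * U = U * D') :
    Uᵀ * V * D - D'ᵀ * (Uᵀ * V) = Uᵀ * (S - S') * V := by
  have hU' : Uᵀ * S' = D'ᵀ * Uᵀ := by
    rw [← hS'.eq, ← transpose_mul, hU, transpose_mul]
  rw [Matrix.mul_assoc, ← hV, ← Matrix.mul_assoc, ← Matrix.mul_assoc D'ᵀ, ← hU', Matrix.mul_sub,
    Matrix.sub_mul]

lemma dotProduct_self_eq_norm_toLp_sq (z : m → ℝ) : z ⬝ᵥ z = ‖WithLp.toLp 2 z‖ ^ 2 := by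
  rw [← real_inner_self_eq_norm_sq, EuclideanSpace.inner_eq_star_dotProduct]
  rfl

lemma dotProduct_mulVec_self_le_opNorm_sq [DecidableEq k] (E : Matrix m k ℝ) (x : k → ℝ) :
    E *ᵥ x ⬝ᵥ E *ᵥ x ≤ ‖(toEuclideanLin E).toContinuousLinearMap‖ ^ 2 * (x ⬝ᵥ x) := by
  rw [dotProduct_self_eq_norm_toLp_sq, dotProduct_self_eq_norm_toLp_sq x, ← mul_pow]
  gcongr
  exact (toEuclideanLin E).toContinuousLinearMap.le_opNorm (WithLp.toLp 2 x)

lemma transpose_mulVec_dotProduct_self (B : Matrix m k ℝ) (y : m → ℝ) :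
    Bᵀ *ᵥ y ⬝ᵥ Bᵀ *ᵥ y = y ⬝ᵥ (B * Bᵀ) *ᵥ y := by
  rw [← mulVec_mulVec, dotProduct_mulVec, vecMul_transpose, dotProduct_comm]

lemma transpose_mulVec_dotProduct_self_le [DecidableEq m] {W : Matrix m k ℝ} {U : Matrix m l ℝ}
    (hdecomp : W * Wᵀ + U * Uᵀ = 1) (y : m → ℝ) : Uᵀ *ᵥ y ⬝ᵥ Uᵀ *ᵥ y ≤ y ⬝ᵥ y := by
  have hsplit : y ⬝ᵥ y = Wᵀ *ᵥ y ⬝ᵥ Wᵀ *ᵥ y + Uᵀ *ᵥ y ⬝ᵥ Uᵀ *ᵥ y := by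
    rw [transpose_mulVec_dotProduct_self, transpose_mulVec_dotProduct_self, ← dotProduct_add,
      ← add_mulVec, hdecomp, one_mulVec]
  rw [hsplit, le_add_iff_nonneg_left]
  simpa using dotProduct_self_star_nonneg (Wᵀ *ᵥ y)

theorem frobeniusSq_compression_le [DecidableEq m] [DecidableEq k] {E : Matrix m m ℝ}
    {V : Matrix m k ℝ} {W : Matrix m o ℝ} {U : Matrix m l ℝ} (hV : Vᵀ * V = 1)
    (hdecomp : W * Wᵀ + U * Uᵀ = 1) :
    frobeniusSq (Uᵀ * E * V) ≤ Fintype.card k * ‖(toEuclideanLin E).toContinuousLinearMap‖ ^ 2 := by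
  have hcol : ∀ j, (Uᵀ * E * V)ᵀ j = Uᵀ *ᵥ E *ᵥ Vᵀ j := fun j => by
    rw [mulVec_mulVec]
    rfl
  have hunit : ∀ j, Vᵀ j ⬝ᵥ Vᵀ j = 1 := fun j =>
    mul_apply'.symm.trans ((congrFun (congrFun hV j) j).trans (one_apply_eq j))
  rw [frobeniusSq_eq_sum_dotProduct_col, ← nsmul_eq_mul, ← Finset.card_univ, ← Finset.sum_const]
  refine Finset.sum_le_sum fun j _ => ?_
  calc (Uᵀ * E * V)ᵀ j ⬝ᵥ (Uᵀ * E * V)ᵀ j ≤ E *ᵥ Vᵀ j ⬝ᵥ E *ᵥ Vᵀ j := by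
        rw [hcol]; exact transpose_mulVec_dotProduct_self_le hdecomp _
    _ ≤ ‖(toEuclideanLin E).toContinuousLinearMap‖ ^ 2 * (Vᵀ j ⬝ᵥ Vᵀ j) :=
        dotProduct_mulVec_self_le_opNorm_sq E _
    _ = ‖(toEuclideanLin E).toContinuousLinearMap‖ ^ 2 := by rw [hunit, mul_one]

theorem davis_kahan_projection_perturbation_general (n r : ℕ)
    (Sig Sighat : Matrix (Fin n) (Fin n) ℝ)
    (hSymhat : Sighat.IsSymm)
    (V Vhat : Matrix (Fin n) (Fin r) ℝ) (Vperp : Matrix (Fin n) (Fin (n - r)) ℝ)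
    (hV : V.transpose * V = 1) (hVhat : Vhat.transpose * Vhat = 1)
    (hdecomp : Vhat * Vhat.transpose + Vperp * Vperp.transpose = 1)
    (a b γ : ℝ) (hγ : 0 < γ)
    (D0 : Matrix (Fin r) (Fin r) ℝ) (hD0diag : ∀ i j, i ≠ j → D0 i j = 0)
    (hD0 : Sig * V = V * D0) (hD0range : ∀ i, a ≤ D0 i i ∧ D0 i i ≤ b)
    (D1 : Matrix (Fin (n - r)) (Fin (n - r)) ℝ) (hD1diag : ∀ i j, i ≠ j → D1 i j = 0)
    (hD1 : Sighat * Vperp = Vperp * D1)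
    (hD1range : ∀ i, D1 i i < a - γ ∨ b + γ < D1 i i) :
    Real.sqrt (∑ i, ∑ j, ((V * V.transpose - Vhat * Vhat.transpose) i j) ^ 2)
      ≤ Real.sqrt (2 * r)
          * ‖LinearMap.toContinuousLinearMap (Matrix.toEuclideanLin (Sig - Sighat))‖ / γ := by
  set C := ‖(toEuclideanLin (Sig - Sighat)).toContinuousLinearMap‖
  have hsylv : Vperpᵀ * V * diagonal D0.diag - diagonal D1.diag * (Vperpᵀ * V)
      = Vperpᵀ * (Sig - Sighat) * V := by
    rw [IsDiag.diagonal_diag fun i j h => hD0diag i j h, ← diag_transpose,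
      IsDiag.diagonal_diag (IsDiag.transpose fun i j h => hD1diag i j h)]
    exact sylvester_eq_of_invariant hSymhat hD0 hD1
  have hsin : γ ^ 2 * frobeniusSq (Vperpᵀ * V) ≤ frobeniusSq (Vperpᵀ * (Sig - Sighat) * V) :=
    sq_mul_frobeniusSq_le_of_sylvester hγ.le
      (fun i j => le_abs_sub_of_mem_Icc_of_gap (hD0range j) (hD1range i)) hsylv
  have hcomp : frobeniusSq (Vperpᵀ * (Sig - Sighat) * V) ≤ r * C ^ 2 := by
    simpa only [Fintype.card_fin] using frobeniusSq_compression_le (E := Sig - Sighat) hV hdecomp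
  change √(frobeniusSq (V * Vᵀ - Vhat * Vhatᵀ)) ≤ _
  rw [frobeniusSq_sub_projections hV hVhat hdecomp, Real.sqrt_le_iff]
  refine ⟨by positivity, ?_⟩
  rw [div_pow, mul_pow, Real.sq_sqrt (by positivity), le_div_iff₀ (by positivity)]
  linarith

/-- projection perturbation, Davis–Kahan corollary: if the
eigenvalues of the symmetric matrix `Σ` on the invariant subspace spanned by
the orthonormal columns of `V` lie in `[a,b]`, and the eigenvalues of the
symmetric matrix `Σ̂` on the orthogonal complement of the span of `V̂`
(spanned by the orthonormal columns of `V̂ᵖ`) avoid `[a−γ, b+γ]`, then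
`‖VVᵀ − V̂V̂ᵀ‖_F ≤ √(2r)·‖Σ − Σ̂‖₂/γ`, where `‖·‖₂` denotes the ℓ2 operator
norm of the associated Euclidean linear map. -/
theorem davis_kahan_projection_perturbation (n r : ℕ)
    (Sig Sighat : Matrix (Fin n) (Fin n) ℝ)
    (hSym : Sig.IsSymm) (hSymhat : Sighat.IsSymm)
    (V Vhat : Matrix (Fin n) (Fin r) ℝ) (Vperp : Matrix (Fin n) (Fin (n - r)) ℝ)
    (hV : V.transpose * V = 1) (hVhat : Vhat.transpose * Vhat = 1)
    (hVperp : Vperp.transpose * Vperp = 1)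
    (hdecomp : Vhat * Vhat.transpose + Vperp * Vperp.transpose = 1)
    (a b γ : ℝ) (hγ : 0 < γ)
    (D0 : Matrix (Fin r) (Fin r) ℝ) (hD0diag : ∀ i j, i ≠ j → D0 i j = 0)
    (hD0 : Sig * V = V * D0) (hD0range : ∀ i, a ≤ D0 i i ∧ D0 i i ≤ b)
    (D1 : Matrix (Fin (n - r)) (Fin (n - r)) ℝ) (hD1diag : ∀ i j, i ≠ j → D1 i j = 0)
    (hD1 : Sighat * Vperp = Vperp * D1)
    (hD1range : ∀ i, D1 i i < a - γ ∨ b + γ < D1 i i) :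
    Real.sqrt (∑ i, ∑ j, ((V * V.transpose - Vhat * Vhat.transpose) i j) ^ 2)
      ≤ Real.sqrt (2 * r)
          * ‖LinearMap.toContinuousLinearMap (Matrix.toEuclideanLin (Sig - Sighat))‖ / γ :=
  davis_kahan_projection_perturbation_general n r Sig Sighat hSymhat V Vhat Vperp hV hVhat hdecomp a
    b γ hγ D0 hD0diag hD0 hD0range D1 hD1diag hD1 hD1range
end

section
/- Counterexample yields rank increase: Suppose Pr[Λ_τ | B_τ]v = Pr[Λ_τ | x_{1:τ}] for some vector v, while for some observation x_{τ+1} and future λ ∈ Λ_{τ+1}, Pr[x_{τ+1}λ | x_{1:τ}] ≠ Pr[x_{τ+1}λ | B_τ]v. Then setting λ' = x_{τ+1}λ and b' = x_{1:τ}, the row vector Pr[λ' | B_τ ∪ {b'}] is linearly independent of the rows of Pr[Λ_τ | B_τ ∪ {b'}]; consequently rank(Pr[Λ_τ ∪ {λ'} | B_τ ∪ {b'}]) = rank(Pr[Λ_τ | B_τ]) + 1 when Pr[Λ_τ|B_τ] is square and full rank. -/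
/-! If `(r, c) = wᵀ [M | u]` with `u = M v`, then `c = wᵀ M v = r ⬝ᵥ v`; so a counterexample
`c ≠ r ⬝ᵥ v` lies outside the row span of `[M | u]`. When the rows of `M` are independent, so
are those of `[M | u]`, and adjoining a row outside their span raises the rank by one. -/

open Matrix Submodule Set

namespace Matrix

section CommRing

variable {R m n : Type*} [CommRing R]

theorem sumElim_ne_vecMul_fromCols_replicateCol_mulVec [Fintype m] [Fintype n]
    {M : Matrix m n R} {v r : n → R} {c : R} (hc : c ≠ r ⬝ᵥ v) (w : m → R) :
    Sum.elim r (fun _ : Unit => c) ≠ w ᵥ* fromCols M (replicateCol Unit (M *ᵥ v)) := by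
  intro h
  rw [vecMul_fromCols] at h
  have hr : r = w ᵥ* M := funext fun j => congrFun h (Sum.inl j)
  apply hc
  calc c = w ⬝ᵥ (M *ᵥ v) := congrFun h (Sum.inr ())
    _ = (w ᵥ* M) ⬝ᵥ v := dotProduct_mulVec w M v
    _ = r ⬝ᵥ v := by rw [hr]

theorem linearIndependent_row_fromCols_left {n' : Type*} {A : Matrix m n R} (B : Matrix m n' R)
    (hA : LinearIndependent R A.row) : LinearIndependent R (fromCols A B).row :=
  LinearIndependent.of_comp (LinearMap.funLeft R R Sum.inl) hA

end CommRing

section Field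

variable {K m n : Type*} [Field K]

theorem linearIndependent_row_of_rank_eq_card [Fintype m] [Fintype n] {A : Matrix m n K}
    (h : A.rank = Fintype.card m) : LinearIndependent K A.row := by
  rw [linearIndependent_iff_card_eq_finrank_span, ← h, rank_eq_finrank_span_row]
  rfl

theorem linearIndependent_row_fromRows_replicateRow {A : Matrix m n K} {r : n → K}
    (hA : LinearIndependent K A.row) (hr : r ∉ span K (range A.row)) :
    LinearIndependent K (fromRows A (replicateRow Unit r)).row := by
  have hr₀ : r ≠ 0 := fun h => hr (h ▸ zero_mem _)
  refine linearIndependent_sum.mpr ⟨hA, linearIndependent_unique_iff.mpr hr₀, ?_⟩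
  change Disjoint _ (span K (range fun _ : Unit => r))
  rwa [range_const, disjoint_span_singleton' hr₀]

theorem rank_fromRows_replicateRow [Fintype m] [Fintype n] {A : Matrix m n K} {r : n → K}
    (hA : LinearIndependent K A.row) (hr : r ∉ span K (range A.row)) :
    (fromRows A (replicateRow Unit r)).rank = Fintype.card m + 1 := by
  rw [(linearIndependent_row_fromRows_replicateRow hA hr).rank_matrix, Fintype.card_sum,
    Fintype.card_unit]

end Field

end Matrix

theorem counterexample_rank_increase_general
    {L ι : Type*} [Fintype L] [Fintype ι]
    (M : Matrix L ι ℝ)          -- Pr[Λ_τ | B_τ]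
    (u : L → ℝ)                 -- Pr[Λ_τ | x_{1:τ}]
    (rlam : ι → ℝ)              -- Pr[λ' | B_τ]
    (cval : ℝ)                  -- Pr[λ' | x_{1:τ}]
    (v : ι → ℝ) (hv : M.mulVec v = u)
    (hne : cval ≠ ∑ j, rlam j * v j)
    (M' : Matrix L (ι ⊕ Unit) ℝ)   -- Pr[Λ_τ | B_τ ∪ {b'}]
    (hM' : ∀ l, (∀ j, M' l (Sum.inl j) = M l j) ∧ M' l (Sum.inr ()) = u l)
    (r' : ι ⊕ Unit → ℝ)            -- Pr[λ' | B_τ ∪ {b'}]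
    (hr'l : ∀ j, r' (Sum.inl j) = rlam j) (hr'r : r' (Sum.inr ()) = cval)
    (Mfull : Matrix (L ⊕ Unit) (ι ⊕ Unit) ℝ)  -- Pr[Λ_τ ∪ {λ'} | B_τ ∪ {b'}]
    (hMfull : ∀ j, (∀ l, Mfull (Sum.inl l) j = M' l j) ∧ Mfull (Sum.inr ()) j = r' j) :
    (¬ ∃ w : L → ℝ, ∀ j, r' j = ∑ l, w l * M' l j) ∧
      (Fintype.card L = Fintype.card ι → M.rank = Fintype.card ι →
        Mfull.rank = M.rank + 1) := by
  subst hv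
  obtain rfl : Mfull = fromRows M' (replicateRow Unit r') := by
    ext (l | _) j <;> simp [hMfull]
  obtain rfl : M' = fromCols M (replicateCol Unit (M *ᵥ v)) := by
    ext l (j | _) <;> simp [hM']
  obtain rfl : r' = Sum.elim rlam fun _ => cval := by
    ext (j | _) <;> simp [hr'l, hr'r]
  have hnot := sumElim_ne_vecMul_fromCols_replicateCol_mulVec (M := M) hne
  refine ⟨fun ⟨w, hw⟩ => hnot w (funext hw), fun hcard hrank => ?_⟩
  have hM := linearIndependent_row_of_rank_eq_card (hrank.trans hcard.symm)
  have hr' : Sum.elim rlam (fun _ => cval) ∉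
      span ℝ (range (fromCols M (replicateCol Unit (M *ᵥ v))).row) := by
    rw [← range_vecMulLinear]
    rintro ⟨w, hw⟩
    exact hnot w hw.symm
  rw [rank_fromRows_replicateRow (linearIndependent_row_fromCols_left _ hM) hr', hrank, hcard]

/-- a counterexample yields a rank increase: if
`Pr[Λ_τ|B_τ] v = Pr[Λ_τ|x_{1:τ}]` but `Pr[λ'|x_{1:τ}] ≠ Pr[λ'|B_τ] v` for
`λ' = x_{τ+1}λ`, then, adding `b' = x_{1:τ}` as a new column, the row
`Pr[λ'|B_τ ∪ {b'}]` is linearly independent of the rows of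
`Pr[Λ_τ|B_τ ∪ {b'}]`; consequently, when `Pr[Λ_τ|B_τ]` is square and of full
rank, the extended matrix has rank `rank(Pr[Λ_τ|B_τ]) + 1`. -/
theorem counterexample_rank_increase
    {L ι : Type*} [Fintype L] [Fintype ι] [DecidableEq L] [DecidableEq ι]
    (M : Matrix L ι ℝ)          -- Pr[Λ_τ | B_τ]
    (u : L → ℝ)                 -- Pr[Λ_τ | x_{1:τ}]
    (rlam : ι → ℝ)              -- Pr[λ' | B_τ]
    (cval : ℝ)                  -- Pr[λ' | x_{1:τ}]
    (v : ι → ℝ) (hv : M.mulVec v = u)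
    (hne : cval ≠ ∑ j, rlam j * v j)
    (M' : Matrix L (ι ⊕ Unit) ℝ)   -- Pr[Λ_τ | B_τ ∪ {b'}]
    (hM' : ∀ l, (∀ j, M' l (Sum.inl j) = M l j) ∧ M' l (Sum.inr ()) = u l)
    (r' : ι ⊕ Unit → ℝ)            -- Pr[λ' | B_τ ∪ {b'}]
    (hr'l : ∀ j, r' (Sum.inl j) = rlam j) (hr'r : r' (Sum.inr ()) = cval)
    (Mfull : Matrix (L ⊕ Unit) (ι ⊕ Unit) ℝ)  -- Pr[Λ_τ ∪ {λ'} | B_τ ∪ {b'}]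
    (hMfull : ∀ j, (∀ l, Mfull (Sum.inl l) j = M' l j) ∧ Mfull (Sum.inr ()) j = r' j) :
    (¬ ∃ w : L → ℝ, ∀ j, r' j = ∑ l, w l * M' l j) ∧
      (Fintype.card L = Fintype.card ι → M.rank = Fintype.card ι →
        Mfull.rank = M.rank + 1) :=
  counterexample_rank_increase_general M u rlam cval v hv hne M' hM' r' hr'l hr'r Mfull hMfull
end

section
/- Parity with noise has fidelity (1−2α)²/2 under bases of size 2: For the noisy parity distribution on {0,1}^T with secret set S ⊆ [T−1] and noise α ∈ (0,1/2), at each length t there exist two conditional future distributions v₁, v₂ (corresponding to the two parities of the revealed bits in S ∩ [t]); with B the 2-element basis realizing both and d the uniform mixture, the Gram matrix Vᵀ D^{-1} V (where V = [v₁ v₂], D = diag(d)) has eigenvalues 1 and (1−2α)², and d(f) = 2^{-(T-t)} for every future f. In particular the second eigenvalue of the fidelity matrix is at least (1−2α)²/2. -/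
attribute [local instance] Classical.propDecidable

/-- The noisy parity distribution on `{0,1}^T`: the first `T-1` bits are
uniform, and the last bit equals the parity of the secret bits with
probability `1-α` and its complement with probability `α`. -/
noncomputable def parityP (T : ℕ) (hT : 0 < T) (Ssec : Finset (Fin T)) (α : ℝ)
    (x : Fin T → Bool) : ℝ :=
  (1 / 2 : ℝ) ^ (T - 1) *
    (if (Odd (∑ i ∈ Ssec, if x i = true then 1 else 0) ↔ x ⟨T - 1, by omega⟩ = true)
      then 1 - α else α)

/-- Marginal probability of a length-`t` prefix under the noisy parity
distribution. -/
noncomputable def margPar (T : ℕ) (hT : 0 < T) (Ssec : Finset (Fin T)) (α : ℝ)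
    (t : ℕ) (ht : t ≤ T) (h : Fin t → Bool) : ℝ :=
  ∑ y : Fin T → Bool,
    if (∀ i : Fin t, y (Fin.castLE ht i) = h i) then parityP T hT Ssec α y else 0

/-- The conditional probability `Pr[f | h]` of a future `f` of length `T - t`
given a history `h` of length `t` under the noisy parity distribution. -/
noncomputable def condPar (T : ℕ) (hT : 0 < T) (Ssec : Finset (Fin T)) (α : ℝ)
    (t : ℕ) (ht : t ≤ T) (h : Fin t → Bool) (f : Fin (T - t) → Bool) : ℝ :=
  parityP T hT Ssec α
      (fun i => if hi : (i : ℕ) < t then h ⟨i, hi⟩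
        else f ⟨(i : ℕ) - t, by have := i.isLt; omega⟩)
    / margPar T hT Ssec α t ht h

/-!
Glue a history `h` of length `t` to a future `f`. The noisy parity weight of the glued trajectory
is `2^{-(T-1)}` times a weight `w_b(f) ∈ {α, 1 - α}` that depends on `h` only through the number
`b` of secret bits set in `h`, and only through its parity. The last bit is not secret, so
flipping it in `f` turns `w_b` into `1 - w_b`: the futures carry total weight `2^{T-t-1}`, every
history has marginal `2^{-t}`, and `Pr[· | h]` is one of `v_b = 2^{-(T-t-1)} w_b`, `b ∈ {0, 1}`.
Since `w_1 = 1 - w_0` and `w_0 (1 - w_0) = α (1 - α)`, the uniform mixture is `2^{-(T-t)}` and the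
Gram entries follow from `∑ w_0 w_1 = 2^{T-t} α(1-α)` and `w_b² = w_b - α(1-α)`.
-/

theorem two_mul_sum_eq_of_involutive {ι R : Type*} [Fintype ι] [CommSemiring R]
    {e : ι → ι} (he : Function.Involutive e) {g : ι → R} {c : R}
    (hg : ∀ x, g x + g (e x) = c) :
    2 * ∑ x, g x = Fintype.card ι * c := by
  calc 2 * ∑ x, g x = ∑ x, g x + ∑ x, g (e x) := by
        rw [two_mul, he.bijective.sum_comp g]
    _ = Fintype.card ι * c := by
        simp [← Finset.sum_add_distrib, hg]

theorem fin_two_const_diag_mulVec_one_one {R : Type*} [CommRing R] (a b : R) :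
    (!![a, b; b, a]).mulVec ![1, 1] = (a + b) • ![1, 1] := by
  ext i; fin_cases i <;> simp [add_comm]

theorem fin_two_const_diag_mulVec_one_neg_one {R : Type*} [CommRing R] (a b : R) :
    (!![a, b; b, a]).mulVec ![1, -1] = (a - b) • ![1, -1] := by
  ext i; fin_cases i <;> simp <;> ring

section Glue

variable {β : Type*} {T t : ℕ}

/-- The gluing used in the body of `condPar`. -/
def glue (h : Fin t → β) (f : Fin (T - t) → β) : Fin T → β :=
  fun i => if hi : (i : ℕ) < t then h ⟨i, hi⟩ else f ⟨(i : ℕ) - t, by omega⟩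

theorem glue_castLE (ht : t ≤ T) (h : Fin t → β) (f : Fin (T - t) → β) (i : Fin t) :
    glue h f (Fin.castLE ht i) = h i := by
  simp [glue]

def glueEquiv (ht : t ≤ T) : (Fin t → β) × (Fin (T - t) → β) ≃ (Fin T → β) where
  toFun p := glue p.1 p.2
  invFun y := (fun i => y (Fin.castLE ht i), fun k => y ⟨t + k, by omega⟩)
  left_inv p := by
    ext i
    · exact glue_castLE ht p.1 p.2 i
    · simp [glue]
  right_inv y := by
    funext i
    by_cases hi : (i : ℕ) < t
    · simp [glue, hi]
    · simp only [glue, dif_neg hi]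
      congr 1; ext; simp; omega

theorem sum_ite_castLE_eq_sum_glue [Fintype β] [DecidableEq β] {M : Type*} [AddCommMonoid M]
    (ht : t ≤ T) (h : Fin t → β) (g : (Fin T → β) → M) :
    ∑ y, (if ∀ i, y (Fin.castLE ht i) = h i then g y else 0) =
      ∑ f : Fin (T - t) → β, g (glue h f) := by
  rw [← (glueEquiv ht).sum_comp, Fintype.sum_prod_type]
  simp [glueEquiv, glue_castLE, ← funext_iff, Finset.sum_ite_irrel]

end Glue

section NoisyParity

def histSecretCount {T t : ℕ} (S : Finset (Fin T)) (h : Fin t → Bool) : ℕ :=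
  ∑ i ∈ S, if hi : (i : ℕ) < t then (if h ⟨i, hi⟩ = true then 1 else 0) else 0

def futSecretCount {T t : ℕ} (S : Finset (Fin T)) (f : Fin (T - t) → Bool) : ℕ :=
  ∑ i ∈ S, if hi : (i : ℕ) < t then 0
    else if f ⟨(i : ℕ) - t, by omega⟩ = true then 1 else 0

def futWeight {T t : ℕ} (ht : t < T) (S : Finset (Fin T)) (α : ℝ) (b : ℕ)
    (f : Fin (T - t) → Bool) : ℝ :=
  if (Odd (b + futSecretCount S f) ↔ f ⟨T - t - 1, by omega⟩ = true) then 1 - α else α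

/-- The paper's `v_j`: the conditional distribution of the future given any history whose
secret bits sum to `b`. -/
noncomputable def futDist {T t : ℕ} (ht : t < T) (S : Finset (Fin T)) (α : ℝ) (b : ℕ)
    (f : Fin (T - t) → Bool) : ℝ :=
  (1 / 2 : ℝ) ^ (T - t - 1) * futWeight ht S α b f

variable {T t : ℕ} (ht : t < T) (S : Finset (Fin T)) (α : ℝ)

theorem secretCount_glue (h : Fin t → Bool) (f : Fin (T - t) → Bool) :
    (∑ i ∈ S, if glue h f i = true then 1 else 0) =
      histSecretCount S h + futSecretCount S f := by
  rw [histSecretCount, futSecretCount, ← Finset.sum_add_distrib]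
  refine Finset.sum_congr rfl fun i _ => ?_
  by_cases hi : (i : ℕ) < t <;> simp [glue, hi]

theorem futSecretCount_update_last (hS : ∀ i ∈ S, (i : ℕ) < T - 1)
    (f : Fin (T - t) → Bool) (x : Bool) :
    futSecretCount S (Function.update f ⟨T - t - 1, by omega⟩ x) = futSecretCount S f := by
  refine Finset.sum_congr rfl fun i hi => ?_
  have := hS i hi
  by_cases h : (i : ℕ) < t
  · simp only [dif_pos h]
  · have hne : (⟨(i : ℕ) - t, by omega⟩ : Fin (T - t)) ≠ ⟨T - t - 1, by omega⟩ := by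
      rw [Ne, Fin.mk.injEq]; omega
    simp only [dif_neg h, Function.update_of_ne hne]

theorem futWeight_add_one (b : ℕ) (f : Fin (T - t) → Bool) :
    futWeight ht S α (b + 1) f = 1 - futWeight ht S α b f := by
  simp only [futWeight, add_right_comm b, Nat.odd_add_one, ← not_iff, ite_not]
  split_ifs <;> ring

theorem futWeight_mul_one_sub (b : ℕ) (f : Fin (T - t) → Bool) :
    futWeight ht S α b f * (1 - futWeight ht S α b f) = α * (1 - α) := by
  unfold futWeight; split_ifs <;> ring

theorem futDist_eq_of_odd_iff {b b' : ℕ} (hb : Odd b ↔ Odd b') :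
    futDist ht S α b = futDist ht S α b' := by
  funext f
  simp only [futDist, futWeight, Nat.odd_add, hb]

theorem futWeight_update_last (hS : ∀ i ∈ S, (i : ℕ) < T - 1) (b : ℕ)
    (f : Fin (T - t) → Bool) :
    futWeight ht S α b
        (Function.update f ⟨T - t - 1, by omega⟩ (!f ⟨T - t - 1, by omega⟩)) =
      1 - futWeight ht S α b f := by
  have iff_not_toggle (P : Prop) (x : Bool) : (P ↔ (!x) = true) ↔ ¬(P ↔ x = true) := by
    cases x <;> simp
  simp only [futWeight, futSecretCount_update_last ht S hS, Function.update_self,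
    iff_not_toggle, ite_not]
  split_ifs <;> ring

theorem two_mul_sum_futWeight (hS : ∀ i ∈ S, (i : ℕ) < T - 1) (b : ℕ) :
    2 * ∑ f, futWeight ht S α b f = 2 ^ (T - t) := by
  have hflip : Function.Involutive fun f : Fin (T - t) → Bool =>
      Function.update f ⟨T - t - 1, by omega⟩ (!f ⟨T - t - 1, by omega⟩) := by
    intro f; simp
  rw [two_mul_sum_eq_of_involutive hflip (c := 1)
    fun f => by rw [futWeight_update_last ht S α hS]; ring]
  simp

theorem parityP_glue (hT : 0 < T) (h : Fin t → Bool) (f : Fin (T - t) → Bool) :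
    parityP T hT S α (glue h f) =
      (1 / 2 : ℝ) ^ (T - 1) * futWeight ht S α (histSecretCount S h) f := by
  have hlast : glue h f ⟨T - 1, by omega⟩ = f ⟨T - t - 1, by omega⟩ := by
    simp only [glue, show ¬(T - 1 < t) by omega, dite_false]
    congr 1; ext; simp; omega
  rw [parityP, futWeight, secretCount_glue, hlast]

theorem margPar_eq (hT : 0 < T) (hS : ∀ i ∈ S, (i : ℕ) < T - 1) (h : Fin t → Bool) :
    margPar T hT S α t ht.le h = (1 / 2 : ℝ) ^ t := by
  have hsplit : (1 / 2 : ℝ) ^ (T - 1) = (1 / 2) ^ t * (1 / 2) ^ (T - t) * 2 := by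
    rw [← pow_add, Nat.add_sub_cancel' ht.le, ← pow_sub_one_mul (by omega : T ≠ 0)]
    ring
  rw [margPar, sum_ite_castLE_eq_sum_glue]
  simp_rw [parityP_glue ht S α hT, ← Finset.mul_sum]
  set b := histSecretCount S h
  calc (1 / 2 : ℝ) ^ (T - 1) * ∑ f, futWeight ht S α b f
      = (1 / 2) ^ t * ((1 / 2) ^ (T - t) * (2 * ∑ f, futWeight ht S α b f)) := by
        rw [hsplit]; ring
    _ = (1 / 2) ^ t := by
        rw [two_mul_sum_futWeight ht S α hS, ← mul_pow]; norm_num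

theorem condPar_eq_futDist (hT : 0 < T) (hS : ∀ i ∈ S, (i : ℕ) < T - 1) (h : Fin t → Bool) :
    condPar T hT S α t ht.le h = futDist ht S α (histSecretCount S h) := by
  funext f
  have hsplit : (1 / 2 : ℝ) ^ (T - 1) = (1 / 2) ^ t * (1 / 2) ^ (T - t - 1) := by
    rw [← pow_add]; congr 1; omega
  change parityP T hT S α (glue h f) / margPar T hT S α t ht.le h = _
  rw [parityP_glue ht S α hT, margPar_eq ht S α hT hS, futDist, hsplit]
  field_simp

theorem condPar_eq_futDist_zero_or_one (hT : 0 < T) (hS : ∀ i ∈ S, (i : ℕ) < T - 1)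
    (h : Fin t → Bool) :
    condPar T hT S α t ht.le h = futDist ht S α 0 ∨
      condPar T hT S α t ht.le h = futDist ht S α 1 := by
  rw [condPar_eq_futDist ht S α hT hS]
  rcases Nat.even_or_odd (histSecretCount S h) with heven | hodd
  · exact .inl <| futDist_eq_of_odd_iff ht S α <|
      iff_of_false (Nat.not_odd_iff_even.2 heven) (by decide)
  · exact .inr <| futDist_eq_of_odd_iff ht S α <| iff_of_true hodd odd_one

theorem futDist_avg (f : Fin (T - t) → Bool) :
    (futDist ht S α 0 f + futDist ht S α 1 f) / 2 = (1 / 2 : ℝ) ^ (T - t) := by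
  have hflip := futWeight_add_one ht S α 0 f
  rw [zero_add] at hflip
  have hpow : (1 / 2 : ℝ) ^ (T - t) = (1 / 2) ^ (T - t - 1) * (1 / 2) :=
    (pow_sub_one_mul (by omega) _).symm
  rw [futDist, futDist, hflip, hpow]
  ring

theorem sum_futWeight_mul_futWeight_add_one (b : ℕ) :
    ∑ f, futWeight ht S α b f * futWeight ht S α (b + 1) f = 2 ^ (T - t) * (α * (1 - α)) := by
  simp_rw [futWeight_add_one, futWeight_mul_one_sub]
  simp

theorem two_mul_sum_futWeight_sq (hS : ∀ i ∈ S, (i : ℕ) < T - 1) (b : ℕ) :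
    2 * ∑ f, futWeight ht S α b f * futWeight ht S α b f =
      2 ^ (T - t) * (α ^ 2 + (1 - α) ^ 2) := by
  have hsq (f : Fin (T - t) → Bool) :
      futWeight ht S α b f * futWeight ht S α b f = futWeight ht S α b f - α * (1 - α) := by
    linear_combination -futWeight_mul_one_sub ht S α b f
  simp_rw [hsq]
  rw [Finset.sum_sub_distrib, mul_sub, two_mul_sum_futWeight ht S α hS]
  simp
  ring

theorem half_sum_futDist_mul_div_avg (i j : ℕ) :
    (1 / 2 : ℝ) * ∑ f, futDist ht S α i f * futDist ht S α j f /
        ((futDist ht S α 0 f + futDist ht S α 1 f) / 2) =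
      2 * (1 / 2) ^ (T - t) * ∑ f, futWeight ht S α i f * futWeight ht S α j f := by
  have hpow : (1 / 2 : ℝ) ^ (T - t) = (1 / 2) ^ (T - t - 1) * (1 / 2) :=
    (pow_sub_one_mul (by omega) _).symm
  simp_rw [futDist_avg, Finset.mul_sum, futDist, hpow]
  refine Finset.sum_congr rfl fun f _ => ?_
  field_simp

theorem gram_futDist_self (hS : ∀ i ∈ S, (i : ℕ) < T - 1) (b : ℕ) :
    (1 / 2 : ℝ) * ∑ f, futDist ht S α b f * futDist ht S α b f /
        ((futDist ht S α 0 f + futDist ht S α 1 f) / 2) = α ^ 2 + (1 - α) ^ 2 := by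
  have hinv : (1 / 2 : ℝ) ^ (T - t) * 2 ^ (T - t) = 1 := by rw [← mul_pow]; norm_num
  rw [half_sum_futDist_mul_div_avg]
  linear_combination (1 / 2 : ℝ) ^ (T - t) * two_mul_sum_futWeight_sq ht S α hS b
    + (α ^ 2 + (1 - α) ^ 2) * hinv

theorem gram_futDist_zero_one :
    (1 / 2 : ℝ) * ∑ f, futDist ht S α 0 f * futDist ht S α 1 f /
        ((futDist ht S α 0 f + futDist ht S α 1 f) / 2) = 2 * α * (1 - α) := by
  have hinv : (1 / 2 : ℝ) ^ (T - t) * 2 ^ (T - t) = 1 := by rw [← mul_pow]; norm_num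
  rw [half_sum_futDist_mul_div_avg]
  linear_combination 2 * (1 / 2 : ℝ) ^ (T - t) * sum_futWeight_mul_futWeight_add_one ht S α 0
    + 2 * α * (1 - α) * hinv

end NoisyParity

/-- parity with noise has fidelity `(1-2α)²/2` under bases of
size 2: at each length `t` there are exactly two conditional future
distributions `v 0, v 1`; the uniform mixture `d` equals `2^{-(T-t)}`
everywhere, and the (expectation-weighted) Gram matrix
`G = (1/2)·VᵀD⁻¹V` has entries `α²+(1-α)²` on the diagonal and `2α(1-α)`
off the diagonal, hence eigenvalues `1` and `(1-2α)²` (with eigenvectors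
`(1,1)` and `(1,-1)`). -/
theorem parity_with_noise_fidelity (T t : ℕ) (ht : t < T)
    (Ssec : Finset (Fin T)) (hSsec : ∀ i ∈ Ssec, (i : ℕ) < T - 1)
    (α : ℝ) :
    ∃ v : Fin 2 → (Fin (T - t) → Bool) → ℝ,
      (∀ h : Fin t → Bool,
        condPar T (by omega) Ssec α t ht.le h = v 0
          ∨ condPar T (by omega) Ssec α t ht.le h = v 1) ∧
      (∀ f : Fin (T - t) → Bool, (v 0 f + v 1 f) / 2 = (1 / 2 : ℝ) ^ (T - t)) ∧
      (let d : (Fin (T - t) → Bool) → ℝ := fun f => (v 0 f + v 1 f) / 2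
       let G : Matrix (Fin 2) (Fin 2) ℝ :=
         fun i j => (1 / 2 : ℝ) * ∑ f, v i f * v j f / d f
       G 0 0 = α ^ 2 + (1 - α) ^ 2 ∧ G 1 1 = α ^ 2 + (1 - α) ^ 2 ∧
         G 0 1 = 2 * α * (1 - α) ∧ G 1 0 = 2 * α * (1 - α) ∧
         G.mulVec ![1, 1] = (1 : ℝ) • ![1, 1] ∧
         G.mulVec ![1, -1] = ((1 - 2 * α) ^ 2) • ![1, -1]) := by
  refine ⟨fun i => futDist ht Ssec α i,
    condPar_eq_futDist_zero_or_one ht Ssec α (by omega) hSsec, futDist_avg ht Ssec α, ?_⟩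
  intro d G
  have hdiag (i : Fin 2) : G i i = α ^ 2 + (1 - α) ^ 2 := gram_futDist_self ht Ssec α hSsec i
  have hoff : G 0 1 = 2 * α * (1 - α) := gram_futDist_zero_one ht Ssec α
  have hsymm : G 1 0 = G 0 1 := congrArg _ (Finset.sum_congr rfl fun f _ => by ring)
  have hG : G = !![α ^ 2 + (1 - α) ^ 2, 2 * α * (1 - α);
      2 * α * (1 - α), α ^ 2 + (1 - α) ^ 2] := by
    rw [Matrix.eta_fin_two G, hdiag, hdiag, hsymm, hoff]
  refine ⟨hdiag 0, hdiag 1, hoff, hsymm.trans hoff, ?_, ?_⟩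
  · rw [hG, fin_two_const_diag_mulVec_one_one]
    congr 1; ring
  · rw [hG, fin_two_const_diag_mulVec_one_neg_one]
    congr 1; ring
end
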